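/- For every x ∈ (0, π), the function t ↦ log( sin(x t / 2) )·t·√( log(1 + 1/(x t)) ) is decreasing in t on the interval (0, 1/(10x)): if 0 < t₁ ≤ t₂ < 1/(10x) then the value at t₂ is ≤ the value at t₁. -/

import Mathlib

/-! Substituting `u = x t` turns the function into `logSinSqrtLog (x t) / x`, so it suffices to show
that `logSinSqrtLog` decreases on `(0, 1/4]`. There `ℓ = log (sin (u/2)) ≤ -2` (as `sin (u/2) < u/2 ≤ 1/8 < e⁻²`),
`r = √(log (1 + 1/u)) ≥ 1` and `(u/2) cot (u/2) ≤ 1`, and the derivative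
`(ℓ + (u/2) cot (u/2)) r - ℓ / (2 (u + 1) r)` is at most `(ℓ + 1) + (-ℓ/2) ≤ 0`. -/

open Real Set

noncomputable def logSinSqrtLog (u : ℝ) : ℝ :=
  log (sin (u / 2)) * u * √(log (1 + 1 / u))

lemma mul_cos_lt_sin {v : ℝ} (hv₀ : 0 < v) (hv : v < π / 2) : v * cos v < sin v := by
  have hcos : 0 < cos v := cos_pos_of_mem_Ioo ⟨by linarith [pi_pos], hv⟩
  have htan := lt_tan hv₀ hv
  rwa [tan_eq_sin_div_cos, lt_div_iff₀ hcos] at htan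

lemma exp_two_lt_eight : exp 2 < 8 := by
  have h : exp 2 = exp 1 ^ 2 := by rw [← exp_nat_mul]; norm_num
  rw [h]
  nlinarith [exp_one_lt_d9, exp_pos 1]

lemma log_sin_half_le_neg_two {u : ℝ} (hu₀ : 0 < u) (hu : u ≤ 1 / 4) : log (sin (u / 2)) ≤ -2 := by
  have hsin : 0 < sin (u / 2) := sin_pos_of_pos_of_lt_pi (by positivity) (by linarith [pi_gt_three])
  rw [log_le_iff_le_exp hsin, exp_neg]
  calc sin (u / 2) ≤ u / 2 := (sin_lt (by positivity)).le
    _ ≤ 8⁻¹ := by linarith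
    _ ≤ (exp 2)⁻¹ := inv_anti₀ (exp_pos 2) exp_two_lt_eight.le

lemma one_le_log_one_add_one_div {u : ℝ} (hu₀ : 0 < u) (hu : u ≤ 1 / 2) : 1 ≤ log (1 + 1 / u) := by
  have h2 : 2 ≤ 1 / u := by rw [le_div_iff₀ hu₀]; linarith
  rw [le_log_iff_exp_le (by positivity)]
  linarith [exp_one_lt_three]

lemma hasDerivAt_logSinSqrtLog {u : ℝ} (hu₀ : 0 < u) (hsin : 0 < sin (u / 2))
    (hlog : 0 < log (1 + 1 / u)) :
    HasDerivAt logSinSqrtLog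
      ((log (sin (u / 2)) + u / 2 * cos (u / 2) / sin (u / 2)) * √(log (1 + 1 / u))
        - log (sin (u / 2)) / (2 * (u + 1) * √(log (1 + 1 / u)))) u := by
  have hlogSin : HasDerivAt (fun u ↦ log (sin (u / 2))) (cos (u / 2) * (1 / 2) / sin (u / 2)) u :=
    (((hasDerivAt_id u).div_const 2).sin.log hsin.ne').congr_deriv (by simp)
  have hsqrt : HasDerivAt (fun u ↦ √(log (1 + 1 / u)))
      (-(1 / u ^ 2) / (1 + 1 / u) / (2 * √(log (1 + 1 / u)))) u := by
    have hinv := (hasDerivAt_inv hu₀.ne').const_add 1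
    simp only [← one_div] at hinv
    exact (hinv.log (by positivity)).sqrt hlog.ne'
  refine ((hlogSin.mul (hasDerivAt_id u)).mul hsqrt).congr_deriv ?_
  simp only [id, Pi.mul_apply]
  field_simp
  ring

lemma add_mul_sub_div_nonpos {ℓ q r u : ℝ} (hℓ : ℓ ≤ -2) (hq : q ≤ 1) (hr : 1 ≤ r) (hu : 0 < u) :
    (ℓ + q) * r - ℓ / (2 * (u + 1) * r) ≤ 0 := by
  have hfirst : (ℓ + q) * r ≤ ℓ + 1 := by nlinarith
  have hsecond : -ℓ / (2 * (u + 1) * r) ≤ -ℓ / 2 :=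
    div_le_div_of_nonneg_left (by linarith) two_pos (by nlinarith)
  rw [sub_eq_add_neg, ← neg_div]
  linarith

lemma antitoneOn_logSinSqrtLog : AntitoneOn logSinSqrtLog (Ioc 0 (1 / 4)) := by
  have hderiv : ∀ u ∈ Ioc (0 : ℝ) (1 / 4), ∃ d ≤ 0, HasDerivAt logSinSqrtLog d u := by
    rintro u ⟨hu₀, hu⟩
    have hsin : 0 < sin (u / 2) := sin_pos_of_pos_of_lt_pi (by positivity) (by linarith [pi_gt_three])
    have hlog := one_le_log_one_add_one_div hu₀ (by linarith)
    refine ⟨_, add_mul_sub_div_nonpos (log_sin_half_le_neg_two hu₀ hu) ?_ (one_le_sqrt.2 hlog) hu₀,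
      hasDerivAt_logSinSqrtLog hu₀ hsin (by linarith)⟩
    rw [div_le_one hsin]
    exact (mul_cos_lt_sin (by positivity) (by linarith [pi_gt_three])).le
  choose! f' hf'₀ hf' using hderiv
  have hint : interior (Ioc (0 : ℝ) (1 / 4)) ⊆ Ioc 0 (1 / 4) := interior_subset
  exact antitoneOn_of_hasDerivWithinAt_nonpos (convex_Ioc 0 (1 / 4))
    (fun u hu ↦ (hf' u hu).continuousAt.continuousWithinAt)
    (fun u hu ↦ (hf' u (hint hu)).hasDerivWithinAt) (fun u hu ↦ hf'₀ u (hint hu))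

theorem stmt_16 (x : ℝ) (hx : x ∈ Set.Ioo 0 Real.pi) (t₁ t₂ : ℝ)
    (ht₁ : 0 < t₁) (h : t₁ ≤ t₂) (ht₂ : t₂ < 1 / (10 * x)) :
    Real.log (Real.sin (x * t₂ / 2)) * t₂ * Real.sqrt (Real.log (1 + 1 / (x * t₂))) ≤
      Real.log (Real.sin (x * t₁ / 2)) * t₁ * Real.sqrt (Real.log (1 + 1 / (x * t₁))) := by
  have hx₀ : 0 < x := hx.1
  have hxt₂ : x * t₂ < 1 / 10 := by
    rw [lt_div_iff₀ (by positivity : (0 : ℝ) < 10 * x)] at ht₂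
    linarith
  have hle : x * t₁ ≤ x * t₂ := mul_le_mul_of_nonneg_left h hx₀.le
  have hxt₁ : 0 < x * t₁ := by positivity
  have hanti := antitoneOn_logSinSqrtLog ⟨hxt₁, by linarith⟩ ⟨by linarith, by linarith⟩ hle
  simp only [logSinSqrtLog] at hanti
  refine le_of_mul_le_mul_left ?_ hx₀
  linarith
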